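/- Under the cross-entropy gradient flow dθ_j/dt = q_j − π_j(θ) with π = softmax(θ), let i be an index achieving max_j |q_j − π_j(θ(t))| at some time t. If q_i − π_i(θ(t)) > 0 then dπ_i/dt ≥ 0 at t, and if q_i − π_i(θ(t)) < 0 then dπ_i/dt ≤ 0 at t. Consequently the sup-norm distance max_j |q_j − π_j(θ(t))| is nonincreasing along the flow. -/

import Mathlib

open Finset

noncomputable def softmax {n : ℕ} (θ : Fin n → ℝ) (i : Fin n) : ℝ :=
  Real.exp (θ i) / ∑ k, Real.exp (θ k)

lemma softmax_sum_pos {n : ℕ} [NeZero n] (θ : Fin n → ℝ) : 0 < ∑ k, Real.exp (θ k) :=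
  Finset.sum_pos (fun _ _ => Real.exp_pos _) univ_nonempty

lemma softmax_pos {n : ℕ} [NeZero n] (θ : Fin n → ℝ) (i : Fin n) : 0 < softmax θ i :=
  div_pos (Real.exp_pos _) (softmax_sum_pos θ)

lemma softmax_sum_one {n : ℕ} [NeZero n] (θ : Fin n → ℝ) : ∑ k, softmax θ k = 1 := by
  simp only [softmax, ← Finset.sum_div]
  exact div_self (softmax_sum_pos θ).ne'

lemma hasDerivAt_softmax {n : ℕ} [NeZero n] (q : Fin n → ℝ) (θ : ℝ → Fin n → ℝ) (t : ℝ)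
    (hd : ∀ j, HasDerivAt (fun s => θ s j) (q j - softmax (θ t) j) t) (i : Fin n) :
    HasDerivAt (fun s => softmax (θ s) i)
      (softmax (θ t) i * ((q i - softmax (θ t) i)
        - ∑ k, softmax (θ t) k * (q k - softmax (θ t) k))) t := by
  have hSpos := softmax_sum_pos (θ t)
  have hS : HasDerivAt (fun s => ∑ k, Real.exp (θ s k))
      (∑ k, Real.exp (θ t k) * (q k - softmax (θ t) k)) t :=
    HasDerivAt.fun_sum fun k _ => (hd k).exp
  have hN : HasDerivAt (fun s => Real.exp (θ s i))
      (Real.exp (θ t i) * (q i - softmax (θ t) i)) t := (hd i).exp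
  have h : HasDerivAt (fun s => Real.exp (θ s i) / ∑ k, Real.exp (θ s k)) _ t :=
    hN.div hS hSpos.ne'
  convert h using 1
  · rfl
  have hsum : ∀ c : Fin n → ℝ, ∑ k, Real.exp (θ t k) / (∑ m, Real.exp (θ t m)) * c k
      = (∑ k, Real.exp (θ t k) * c k) / (∑ m, Real.exp (θ t m)) := by
    intro c
    rw [Finset.sum_div]
    exact Finset.sum_congr rfl fun k _ => by ring
  simp only [softmax, hsum]
  field_simp

lemma deriv_sign_aux {n : ℕ} [NeZero n] (q p : Fin n → ℝ) (hp : ∀ k, 0 ≤ p k)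
    (hps : ∑ k, p k = 1) (i : Fin n) (hmax : ∀ j, |q j - p j| ≤ |q i - p i|) :
    (0 < q i - p i → 0 ≤ p i * ((q i - p i) - ∑ k, p k * (q k - p k))) ∧
    (q i - p i < 0 → p i * ((q i - p i) - ∑ k, p k * (q k - p k)) ≤ 0) := by
  constructor
  · intro hpos
    apply mul_nonneg (hp i)
    rw [sub_nonneg]
    calc ∑ k, p k * (q k - p k) ≤ ∑ k, p k * (q i - p i) := by
          apply Finset.sum_le_sum; intro k _
          exact mul_le_mul_of_nonneg_left
            ((le_abs_self _).trans ((hmax k).trans_eq (abs_of_pos hpos))) (hp k)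
      _ = q i - p i := by rw [← Finset.sum_mul, hps, one_mul]
  · intro hneg
    apply mul_nonpos_iff.mpr
    left
    refine ⟨hp i, ?_⟩
    rw [sub_nonpos]
    calc q i - p i = ∑ k, p k * (q i - p i) := by rw [← Finset.sum_mul, hps, one_mul]
      _ ≤ ∑ k, p k * (q k - p k) := by
          apply Finset.sum_le_sum; intro k _
          apply mul_le_mul_of_nonneg_left _ (hp k)
          have h1 := hmax k
          rw [abs_of_neg hneg] at h1
          linarith [neg_abs_le (q k - p k)]

theorem sft_sup_distance_nonincreasing {n : ℕ} [NeZero n]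
    (q : Fin n → ℝ) (hq0 : ∀ j, 0 ≤ q j) (hqsum : ∑ j, q j = 1)
    (θ : ℝ → Fin n → ℝ)
    (hflow : ∀ t, 0 ≤ t → ∀ j, HasDerivAt (fun s => θ s j)
      (q j - softmax (θ t) j) t) :
    (∀ t, 0 ≤ t → ∀ i : Fin n,
      (∀ j, |q j - softmax (θ t) j| ≤ |q i - softmax (θ t) i|) →
        (0 < q i - softmax (θ t) i →
          0 ≤ deriv (fun s => softmax (θ s) i) t) ∧
        (q i - softmax (θ t) i < 0 →
          deriv (fun s => softmax (θ s) i) t ≤ 0)) ∧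
    (∀ s t, 0 ≤ s → s ≤ t →
      Finset.univ.sup' Finset.univ_nonempty (fun j => |q j - softmax (θ t) j|) ≤
      Finset.univ.sup' Finset.univ_nonempty (fun j => |q j - softmax (θ s) j|)) := by
  have key : ∀ t, 0 ≤ t → ∀ i : Fin n,
      HasDerivAt (fun s => softmax (θ s) i)
        (softmax (θ t) i * ((q i - softmax (θ t) i)
          - ∑ k, softmax (θ t) k * (q k - softmax (θ t) k))) t :=
    fun t ht i => hasDerivAt_softmax q θ t (hflow t ht) i
  have sign := fun (t : ℝ) (i : Fin n)
      (hmax : ∀ j, |q j - softmax (θ t) j| ≤ |q i - softmax (θ t) i|) =>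
    deriv_sign_aux q (softmax (θ t)) (fun k => (softmax_pos _ k).le)
      (softmax_sum_one _) i hmax
  constructor
  · intro t ht i hmax
    rw [(key t ht i).deriv]
    exact sign t i hmax
  · intro s t hs hst
    set g : Fin n → ℝ → ℝ := fun j x => |q j - softmax (θ x) j| with hgdef
    set f : ℝ → ℝ := fun x => Finset.univ.sup' Finset.univ_nonempty (fun j => g j x)
      with hfdef
    have hcπ : ∀ x, s ≤ x → ∀ j : Fin n, ContinuousAt (fun z => softmax (θ z) j) x :=
      fun x hx j => (key x (hs.trans hx) j).continuousAt
    have hcg : ∀ x, s ≤ x → ∀ j : Fin n, ContinuousAt (g j) x := fun x hx j =>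
      continuous_abs.continuousAt.comp (continuousAt_const.sub (hcπ x hx j))
    have hf : ContinuousOn f (Set.Icc s t) := fun x hx =>
      (ContinuousAt.finset_sup'_apply Finset.univ_nonempty
        (fun j _ => hcg x hx.1 j)).continuousWithinAt
    have bound : ∀ x ∈ Set.Ico s t, ∀ r, (0:ℝ) < r →
        ∃ᶠ z in nhdsWithin x (Set.Ioi x), slope f x z < r := by
      intro x hx r hr
      have hx0 : 0 ≤ x := hs.trans hx.1
      apply Filter.Eventually.frequently
      have hmemIoi : ∀ᶠ z in nhdsWithin x (Set.Ioi x), z ∈ Set.Ioi x :=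
        self_mem_nhdsWithin
      have hall : ∀ j : Fin n, ∀ᶠ z in nhdsWithin x (Set.Ioi x),
          g j z < f x + r * (z - x) := by
        intro j
        have hjle : g j x ≤ f x := Finset.le_sup' (fun j => g j x) (Finset.mem_univ j)
        rcases lt_or_eq_of_le hjle with hlt | heq
        · have h1 : ∀ᶠ z in nhdsWithin x (Set.Ioi x), g j z < f x :=
            (((hcg x hx.1 j).tendsto).eventually
              (eventually_lt_nhds hlt)).filter_mono nhdsWithin_le_nhds
          filter_upwards [h1, hmemIoi] with z hz1 hz2
          have : 0 < r * (z - x) := mul_pos hr (sub_pos.2 hz2)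
          linarith
        · -- g j x = f x : j achieves the max
          have hmax : ∀ k, |q k - softmax (θ x) k| ≤ |q j - softmax (θ x) j| := by
            intro k
            have : g k x ≤ f x := Finset.le_sup' (fun j => g j x) (Finset.mem_univ k)
            rw [← heq] at this
            exact this
          set D := softmax (θ x) j * ((q j - softmax (θ x) j)
            - ∑ k, softmax (θ x) k * (q k - softmax (θ x) k)) with hDdef
          have hsub : Set.Ioi x ⊆ {x}ᶜ := fun z hz =>
            Set.mem_compl_singleton_iff.mpr (ne_of_gt hz)
          rcases lt_trichotomy (q j - softmax (θ x) j) 0 with hneg | hzero | hpos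
          · -- e j x < 0, D ≤ 0; use h(z) = softmax - q with derivative D
            have hD : D ≤ 0 := (sign x j hmax).2 hneg
            have hDj : HasDerivAt (fun z => softmax (θ z) j - q j) D x :=
              (key x hx0 j).sub_const (q j)
            have hslope : ∀ᶠ z in nhdsWithin x (Set.Ioi x),
                slope (fun z => softmax (θ z) j - q j) x z < r :=
              ((hasDerivAt_iff_tendsto_slope.1 hDj).eventually
                (eventually_lt_nhds (lt_of_le_of_lt hD hr))).filter_mono
                (nhdsWithin_mono x hsub)
            have hnegz : ∀ᶠ z in nhdsWithin x (Set.Ioi x),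
                q j - softmax (θ z) j < 0 :=
              (((continuousAt_const.sub (hcπ x hx.1 j)).tendsto).eventually
                (eventually_lt_nhds hneg)).filter_mono nhdsWithin_le_nhds
            filter_upwards [hslope, hnegz, hmemIoi] with z h1 h2 h3
            have hzx : 0 < z - x := sub_pos.2 h3
            rw [slope_def_field, div_lt_iff₀ hzx] at h1
            have hgz : g j z = softmax (θ z) j - q j := by
              simp only [hgdef, abs_of_neg h2]; ring
            have hgx : f x = softmax (θ x) j - q j := by
              rw [← heq]; simp only [hgdef, abs_of_neg hneg]; ring
            rw [hgz, hgx]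
            linarith
          · -- e j x = 0 : everything is zero, D = 0
            have hek : ∀ k, q k - softmax (θ x) k = 0 := by
              intro k
              have := hmax k
              rw [hzero, abs_zero] at this
              exact abs_eq_zero.1 (le_antisymm this (abs_nonneg _))
            have hD : D = 0 := by
              rw [hDdef, hzero]
              have : ∀ k ∈ Finset.univ, softmax (θ x) k * (q k - softmax (θ x) k) = 0 :=
                fun k _ => by rw [hek k, mul_zero]
              rw [Finset.sum_eq_zero this]
              ring
            have hDj : HasDerivAt (fun z => q j - softmax (θ z) j) (-D) x :=
              (key x hx0 j).const_sub (q j)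
            rw [hD, neg_zero] at hDj
            have hslope : ∀ᶠ z in nhdsWithin x (Set.Ioi x),
                slope (fun z => q j - softmax (θ z) j) x z ∈ Set.Ioo (-r) r :=
              ((hasDerivAt_iff_tendsto_slope.1 hDj).eventually
                (Ioo_mem_nhds (neg_lt_zero.2 hr) hr)).filter_mono
                (nhdsWithin_mono x hsub)
            filter_upwards [hslope, hmemIoi] with z h1 h2
            have hzx : 0 < z - x := sub_pos.2 h2
            rw [Set.mem_Ioo, slope_def_field] at h1
            have habs : |q j - softmax (θ z) j - (q j - softmax (θ x) j)| < r * (z - x) := by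
              rw [abs_lt]
              constructor
              · have := h1.1
                rw [lt_div_iff₀ hzx] at this
                linarith
              · have := h1.2
                rw [div_lt_iff₀ hzx] at this
                linarith
            have hfx0 : f x = 0 := by rw [← heq]; simp [hgdef, hzero]
            rw [hzero, sub_zero] at habs
            rw [hfx0]
            simp only [hgdef]
            linarith [habs]
          · -- e j x > 0, D ≥ 0; use h(z) = q - softmax with derivative -D ≤ 0
            have hD : 0 ≤ D := (sign x j hmax).1 hpos
            have hDj : HasDerivAt (fun z => q j - softmax (θ z) j) (-D) x :=
              (key x hx0 j).const_sub (q j)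
            have hslope : ∀ᶠ z in nhdsWithin x (Set.Ioi x),
                slope (fun z => q j - softmax (θ z) j) x z < r :=
              ((hasDerivAt_iff_tendsto_slope.1 hDj).eventually
                (eventually_lt_nhds (lt_of_le_of_lt (neg_nonpos.2 hD) hr))).filter_mono
                (nhdsWithin_mono x hsub)
            have hposz : ∀ᶠ z in nhdsWithin x (Set.Ioi x),
                0 < q j - softmax (θ z) j :=
              (((continuousAt_const.sub (hcπ x hx.1 j)).tendsto).eventually
                (eventually_gt_nhds hpos)).filter_mono nhdsWithin_le_nhds
            filter_upwards [hslope, hposz, hmemIoi] with z h1 h2 h3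
            have hzx : 0 < z - x := sub_pos.2 h3
            rw [slope_def_field, div_lt_iff₀ hzx] at h1
            have hgz : g j z = q j - softmax (θ z) j := abs_of_pos h2
            have hgx : f x = q j - softmax (θ x) j := by
              rw [← heq]; exact abs_of_pos hpos
            rw [hgz, hgx]
            linarith
      have hall' : ∀ᶠ z in nhdsWithin x (Set.Ioi x),
          ∀ j : Fin n, g j z < f x + r * (z - x) :=
        (Filter.eventually_all).2 hall
      filter_upwards [hall', hmemIoi] with z hz hzx
      have hzx' : 0 < z - x := sub_pos.2 hzx
      rw [slope_def_field, div_lt_iff₀ hzx']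
      have hfz : f z < f x + r * (z - x) :=
        (Finset.sup'_lt_iff Finset.univ_nonempty).2 fun j _ => hz j
      linarith
    have main := image_le_of_liminf_slope_right_le_deriv_boundary (B := fun _ => f s)
      (B' := fun _ => 0) hf (le_refl (f s)) continuousOn_const
      (fun x _ => hasDerivWithinAt_const x _ (f s)) bound
    exact main (Set.mem_Icc.2 ⟨hst, le_refl t⟩)
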